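/- Let A, B be bounded linear operators on a complex Hilbert space H, K a nonempty set of unit vectors, ber(T)=sup_{k∈K}|⟨T k,k⟩|, ‖T‖_ber = sup_{k,l∈K}|⟨T k,l⟩|. Then ‖A + B‖_ber² ≤ 2 · ber(A*A + B*B). -/

import Mathlib

open ContinuousLinearMap

noncomputable def berNum {H : Type*} [NormedAddCommGroup H] [InnerProductSpace ℂ H]
    (K : Set H) (T : H →L[ℂ] H) : ℝ :=
  sSup {x : ℝ | ∃ k ∈ K, x = ‖(inner ℂ (T k) k : ℂ)‖}

noncomputable def berNorm {H : Type*} [NormedAddCommGroup H] [InnerProductSpace ℂ H]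
    (K : Set H) (T : H →L[ℂ] H) : ℝ :=
  sSup {x : ℝ | ∃ k ∈ K, ∃ l ∈ K, x = ‖(inner ℂ (T k) l : ℂ)‖}

/-! For `k` a unit vector, `|⟨(A + B) k, l⟩| ≤ ‖A k + B k‖` and
`‖A k + B k‖² ≤ 2 (‖A k‖² + ‖B k‖²) = 2 ⟨(A*A + B*B) k, k⟩ ≤ 2 ber(A*A + B*B)`;
taking the supremum over `k, l ∈ K` gives the claim. -/

section Berezin

variable {H : Type*} [NormedAddCommGroup H] [InnerProductSpace ℂ H]

theorem berNum_nonneg (K : Set H) (T : H →L[ℂ] H) : 0 ≤ berNum K T :=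
  Real.sSup_nonneg <| by rintro x ⟨k, -, rfl⟩; exact norm_nonneg _

theorem berNorm_nonneg (K : Set H) (T : H →L[ℂ] H) : 0 ≤ berNorm K T :=
  Real.sSup_nonneg <| by rintro x ⟨k, -, l, -, rfl⟩; exact norm_nonneg _

theorem norm_inner_self_le_berNum {K : Set H} (hK : ∀ k ∈ K, ‖k‖ ≤ 1) (T : H →L[ℂ] H)
    {k : H} (hk : k ∈ K) : ‖(inner ℂ (T k) k : ℂ)‖ ≤ berNum K T := by
  refine le_csSup ⟨‖T‖, ?_⟩ ⟨k, hk, rfl⟩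
  rintro x ⟨k, hk, rfl⟩
  calc ‖(inner ℂ (T k) k : ℂ)‖ ≤ ‖T k‖ * ‖k‖ := norm_inner_le_norm _ _
    _ ≤ ‖T‖ * ‖k‖ * ‖k‖ := by gcongr; exact T.le_opNorm k
    _ ≤ ‖T‖ * 1 * 1 := by gcongr <;> exact hK k hk
    _ = ‖T‖ := by ring

theorem berNorm_sq_le {K : Set H} {T : H →L[ℂ] H} {c : ℝ} (hc : 0 ≤ c)
    (h : ∀ k ∈ K, ∀ l ∈ K, ‖(inner ℂ (T k) l : ℂ)‖ ^ 2 ≤ c) : berNorm K T ^ 2 ≤ c := by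
  have hle : berNorm K T ≤ √c := by
    refine Real.sSup_le ?_ (Real.sqrt_nonneg c)
    rintro x ⟨k, hk, l, hl, rfl⟩
    exact (Real.le_sqrt (norm_nonneg _) hc).mpr (h k hk l hl)
  simpa [Real.sq_sqrt hc] using pow_le_pow_left₀ (berNorm_nonneg K T) hle 2

end Berezin

theorem inner_adjoint_mul_self_add_apply {H : Type*} [NormedAddCommGroup H]
    [InnerProductSpace ℂ H] [CompleteSpace H] (A B : H →L[ℂ] H) (k : H) :
    (inner ℂ ((adjoint A * A + adjoint B * B) k) k : ℂ) = ((‖A k‖ ^ 2 + ‖B k‖ ^ 2 : ℝ) : ℂ) := by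
  simp only [_root_.add_apply, mul_apply_eq_comp, inner_add_left,
    adjoint_inner_left, inner_self_eq_norm_sq_to_K]
  norm_cast

theorem norm_add_sq_le_adjoint_mul_self_add {H : Type*} [NormedAddCommGroup H]
    [InnerProductSpace ℂ H] [CompleteSpace H] (A B : H →L[ℂ] H) (k : H) :
    ‖(A + B) k‖ ^ 2 ≤ 2 * ‖(inner ℂ ((adjoint A * A + adjoint B * B) k) k : ℂ)‖ := by
  rw [inner_adjoint_mul_self_add_apply, Complex.norm_real, Real.norm_of_nonneg (by positivity)]
  calc ‖(A + B) k‖ ^ 2 ≤ (‖A k‖ + ‖B k‖) ^ 2 := by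
        gcongr; exact norm_add_le (A k) (B k)
    _ ≤ 2 * (‖A k‖ ^ 2 + ‖B k‖ ^ 2) := add_sq_le

theorem berNorm_add_sq_general {H : Type*} [NormedAddCommGroup H] [InnerProductSpace ℂ H] [CompleteSpace H]
    (A B : H →L[ℂ] H) (K : Set H) (hK1 : ∀ k ∈ K, ‖k‖ = 1) :
    (berNorm K (A + B)) ^ 2 ≤ 2 * berNum K (adjoint A * A + adjoint B * B) := by
  have hK : ∀ k ∈ K, ‖k‖ ≤ 1 := fun k hk => (hK1 k hk).le
  refine berNorm_sq_le (mul_nonneg zero_le_two (berNum_nonneg _ _)) ?_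
  intro k hk l hl
  calc ‖(inner ℂ ((A + B) k) l : ℂ)‖ ^ 2 ≤ (‖(A + B) k‖ * ‖l‖) ^ 2 := by
        gcongr; exact norm_inner_le_norm _ _
    _ = ‖(A + B) k‖ ^ 2 := by rw [hK1 l hl, mul_one]
    _ ≤ 2 * ‖(inner ℂ ((adjoint A * A + adjoint B * B) k) k : ℂ)‖ :=
        norm_add_sq_le_adjoint_mul_self_add A B k
    _ ≤ 2 * berNum K (adjoint A * A + adjoint B * B) := by
        gcongr; exact norm_inner_self_le_berNum hK _ hk

theorem berNorm_add_sq {H : Type*} [NormedAddCommGroup H] [InnerProductSpace ℂ H] [CompleteSpace H]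
    (A B : H →L[ℂ] H) (K : Set H) (hK : K.Nonempty) (hK1 : ∀ k ∈ K, ‖k‖ = 1) :
    (berNorm K (A + B)) ^ 2 ≤ 2 * berNum K (adjoint A * A + adjoint B * B) :=
  berNorm_add_sq_general A B K hK1
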